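/- Fix y, m ∈ ℝ and α₀, β₀ > 0. Consider the functional Φ(q) = ∫_{(0,∞)} [ (1/2)·log(2π) − (1/2)·log λ + λ·(y − m)²/2 ] dq(λ) + KL(q ‖ Gamma(α₀, β₀)) over probability measures q on (0,∞) with q ≪ Gamma(α₀, β₀), finite KL(q‖Gamma(α₀,β₀)), and λ-integrand q-integrable (the integrand is the negative log-density −log N(y | m, λ^{-1}) of a Gaussian with mean m and precision λ evaluated at y). Then Φ is uniquely minimized at q* = Gamma( α₀ + 1/2 , β₀ + (y − m)²/2 ). -/

import Mathlib

/-!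
Write `−log N(y | m, λ⁻¹) = ½ log 2π − g λ` with `g λ = ½ log λ − c λ`, `c = (y − m)²/2`, so that
`Φ q = ½ log 2π + KL(q‖p) − ∫ g dq` for `p = Gamma(α₀, β₀)`. The Gibbs variational principle
rewrites `KL(q‖p) − ∫ g dq` as `KL(q‖p_g) − log ∫ exp g dp`, where `p_g` is the exponential tilt
of `p` by `g`; by Gibbs' inequality this is uniquely minimal at `q = p_g`. Finally, tilting the
density `λ^(α₀-1) e^(−β₀ λ)` by `exp g = λ^(1/2) e^(−c λ)` gives `Gamma(α₀ + 1/2, β₀ + c)`.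
-/

open MeasureTheory ProbabilityTheory
open scoped ENNReal NNReal

/- Kullback–Leibler divergence `KL(q‖p)`, valued in `[0,∞]`:
`∫ log (dq/dp) dq` if `q ≪ p` and the log-density is `q`-integrable, and `+∞` otherwise. -/
open Classical in
noncomputable def klDiv {Ω : Type*} [MeasurableSpace Ω] (q p : Measure Ω) : ℝ≥0∞ :=
  if q ≪ p ∧ Integrable (llr q p) q then ENNReal.ofReal (∫ x, llr q p x ∂q) else ⊤

/- The negative Gaussian log-density `−log N(y | m, λ⁻¹)` as a function of the precision `λ`. -/
noncomputable def negLogGauss (y m lam : ℝ) : ℝ :=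
  (1 / 2) * Real.log (2 * Real.pi) - (1 / 2) * Real.log lam + lam * (y - m) ^ 2 / 2

/- The functional `Φ(q) = ∫ (−log N(y|m,λ⁻¹)) dq(λ) + KL(q ‖ Gamma(α₀, β₀))`. -/
noncomputable def noiseObjective (y m α₀ β₀ : ℝ) (q : Measure ℝ) : ℝ :=
  (∫ l, negLogGauss y m l ∂q) + (klDiv q (gammaMeasure α₀ β₀)).toReal

open Real Set

section Tilted

variable {α : Type*} [MeasurableSpace α] {μ ν : Measure α} [IsProbabilityMeasure ν]
  {f : α → ℝ} {K : ℝ}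

lemma integrable_exp_and_integral_exp_eq_of_withDensity_eq_smul (hf : AEMeasurable f μ)
    (h : μ.withDensity (fun x => ENNReal.ofReal (exp (f x))) = ENNReal.ofReal K • ν)
    (hK : 0 ≤ K) :
    Integrable (fun x => exp (f x)) μ ∧ ∫ x, exp (f x) ∂μ = K := by
  have hlint : ∫⁻ x, ENNReal.ofReal (exp (f x)) ∂μ = ENNReal.ofReal K := by
    rw [← setLIntegral_univ, ← withDensity_apply _ MeasurableSet.univ, h]
    simp
  have hmeas : AEStronglyMeasurable (fun x => exp (f x)) μ :=
    (measurable_exp.comp_aemeasurable hf).aestronglyMeasurable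
  have hnonneg : 0 ≤ᵐ[μ] fun x => exp (f x) := ae_of_all _ fun x => (exp_pos _).le
  refine ⟨(lintegral_ofReal_ne_top_iff_integrable hmeas hnonneg).mp (by simp [hlint]), ?_⟩
  rw [integral_eq_lintegral_of_nonneg_ae hnonneg hmeas, hlint, ENNReal.toReal_ofReal hK]

lemma tilted_eq_of_withDensity_eq_smul (hf : AEMeasurable f μ)
    (h : μ.withDensity (fun x => ENNReal.ofReal (exp (f x))) = ENNReal.ofReal K • ν)
    (hK : 0 < K) : μ.tilted f = ν := by
  rw [Measure.tilted, (integrable_exp_and_integral_exp_eq_of_withDensity_eq_smul hf h hK.le).2]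
  have hdens : (fun x => ENNReal.ofReal (exp (f x) / K))
      = ENNReal.ofReal K⁻¹ • fun x => ENNReal.ofReal (exp (f x)) := by
    ext x
    rw [Pi.smul_apply, smul_eq_mul, ← ENNReal.ofReal_mul (inv_nonneg.mpr hK.le), div_eq_inv_mul]
  rw [hdens, withDensity_smul' _ _ ENNReal.ofReal_ne_top, h, smul_smul,
    ← ENNReal.ofReal_mul (inv_nonneg.mpr hK.le), inv_mul_cancel₀ hK.ne', ENNReal.ofReal_one,
    one_smul]

end Tilted

section Gibbs

variable {α : Type*} [MeasurableSpace α] {p q : Measure α} {g : α → ℝ}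

/-- Mathlib's `klDiv` carries the correction `p.real univ - q.real univ`, which vanishes here. -/
lemma klDiv_eq_informationTheory_klDiv [IsFiniteMeasure q] [IsFiniteMeasure p]
    (h : q univ = p univ) : klDiv q p = InformationTheory.klDiv q p := by
  rw [klDiv]
  split_ifs with hqp
  · simp [InformationTheory.klDiv_of_ac_of_integrable hqp.1 hqp.2, measureReal_def, h]
  · exact (InformationTheory.klDiv_eq_top_iff.mpr fun h₁ h₂ => hqp ⟨h₁, h₂⟩).symm

lemma klDiv_eq_zero_iff [IsFiniteMeasure q] [IsFiniteMeasure p] (h : q univ = p univ) :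
    klDiv q p = 0 ↔ q = p := by
  rw [klDiv_eq_informationTheory_klDiv h, InformationTheory.klDiv_eq_zero_iff]

variable [IsProbabilityMeasure p] [IsProbabilityMeasure q]

lemma toReal_klDiv_sub_integral_eq (hqp : q ≪ p) (hkl : klDiv q p ≠ ⊤) (hg : Integrable g q)
    (hexp : Integrable (fun x => exp (g x)) p) :
    klDiv q (p.tilted g) ≠ ⊤ ∧
      (klDiv q p).toReal - ∫ x, g x ∂q
        = (klDiv q (p.tilted g)).toReal - log (∫ x, exp (g x) ∂p) := by
  have := isProbabilityMeasure_tilted hexp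
  have hqQ : q ≪ p.tilted g := hqp.trans (absolutelyContinuous_tilted hexp)
  rw [klDiv_eq_informationTheory_klDiv (by simp), InformationTheory.klDiv_ne_top_iff] at hkl
  rw [klDiv_eq_informationTheory_klDiv (by simp), klDiv_eq_informationTheory_klDiv (by simp),
    InformationTheory.klDiv_ne_top_iff, InformationTheory.toReal_klDiv_of_measure_eq hqp (by simp),
    InformationTheory.toReal_klDiv_of_measure_eq hqQ (by simp),
    integral_llr_tilted_right hkl.1 hg hexp hkl.2]
  exact ⟨⟨hqQ, integrable_llr_tilted_right hkl.1 hg hkl.2 hexp⟩, by ring⟩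

lemma klDiv_tilted_ne_top (hexp : Integrable (fun x => exp (g x)) p)
    (hg : Integrable g (p.tilted g)) (hgm : AEMeasurable g p) : klDiv (p.tilted g) p ≠ ⊤ := by
  have := isProbabilityMeasure_tilted hexp
  rw [klDiv_eq_informationTheory_klDiv (by simp), InformationTheory.klDiv_ne_top_iff]
  refine ⟨tilted_absolutelyContinuous p g, ?_⟩
  have hllr := (llr_tilted_left Measure.AbsolutelyContinuous.rfl hexp hgm).filter_mono
    (tilted_absolutelyContinuous p g).ae_le
  have hself := (llr_self p).filter_mono (tilted_absolutelyContinuous p g).ae_le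
  rw [integrable_congr hllr]
  exact (hg.sub (integrable_const _)).add ((integrable_zero _ _ _).congr hself.symm)

theorem gibbs_variational_principle (hexp : Integrable (fun x => exp (g x)) p)
    (hgm : AEMeasurable g p) (hgt : Integrable g (p.tilted g)) (hqp : q ≪ p)
    (hkl : klDiv q p ≠ ⊤) (hgq : Integrable g q) :
    (klDiv (p.tilted g) p).toReal - ∫ x, g x ∂(p.tilted g)
        ≤ (klDiv q p).toReal - ∫ x, g x ∂q ∧
      ((klDiv q p).toReal - ∫ x, g x ∂q
          = (klDiv (p.tilted g) p).toReal - ∫ x, g x ∂(p.tilted g) ↔ q = p.tilted g) := by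
  have := isProbabilityMeasure_tilted hexp
  obtain ⟨hqQ, hq⟩ := toReal_klDiv_sub_integral_eq hqp hkl hgq hexp
  obtain ⟨-, hQ⟩ := toReal_klDiv_sub_integral_eq (tilted_absolutelyContinuous p g)
    (klDiv_tilted_ne_top hexp hgt hgm) hgt hexp
  rw [(klDiv_eq_zero_iff rfl).mpr rfl, ENNReal.toReal_zero] at hQ
  rw [hq, hQ, sub_left_inj, ENNReal.toReal_eq_zero_iff, or_iff_left hqQ,
    klDiv_eq_zero_iff (by simp)]
  exact ⟨by linarith [ENNReal.toReal_nonneg (a := klDiv q (p.tilted g))], Iff.rfl⟩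

end Gibbs

/-- The ratio of the normalizing constants of `Gamma(a, r)` and `Gamma(a + s, r + c)`. -/
noncomputable def gammaTiltConst (a r s c : ℝ) : ℝ :=
  r ^ a * Gamma (a + s) / (Gamma a * (r + c) ^ (a + s))

section Gamma

variable {a r s c : ℝ}

lemma gammaTiltConst_pos (ha : 0 < a) (hr : 0 < r) (has : 0 < a + s) (hrc : 0 < r + c) :
    0 < gammaTiltConst a r s c := by
  have := Gamma_pos_of_pos ha
  have := Gamma_pos_of_pos has
  rw [gammaTiltConst]
  positivity

lemma gammaPDFReal_mul_exp (ha : 0 < a) (has : 0 < a + s) (hrc : 0 < r + c) {x : ℝ}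
    (hx : 0 < x) :
    gammaPDFReal a r x * exp (s * log x - c * x)
      = gammaTiltConst a r s c * gammaPDFReal (a + s) (r + c) x := by
  have hΓa := (Gamma_pos_of_pos ha).ne'
  have hΓas := (Gamma_pos_of_pos has).ne'
  have hrc' := (rpow_pos_of_pos hrc (a + s)).ne'
  simp only [gammaPDFReal, gammaTiltConst, if_pos hx.le]
  have hpow : exp (s * log x) = x ^ s := by rw [rpow_def_of_pos hx, mul_comm]
  rw [exp_sub, hpow, show a + s - 1 = (a - 1) + s by ring, rpow_add hx,
    show (r + c) * x = r * x + c * x by ring, neg_add, exp_add, exp_neg (c * x)]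
  field_simp

lemma withDensity_exp_gammaMeasure (ha : 0 < a) (hr : 0 < r) (has : 0 < a + s)
    (hrc : 0 < r + c) :
    (gammaMeasure a r).withDensity (fun x => ENNReal.ofReal (exp (s * log x - c * x)))
      = ENNReal.ofReal (gammaTiltConst a r s c) • gammaMeasure (a + s) (r + c) := by
  have hmeas : Measurable fun x => ENNReal.ofReal (exp (s * log x - c * x)) := by fun_prop
  have hpdf (a r : ℝ) : Measurable (gammaPDF a r) := (measurable_gammaPDFReal a r).ennreal_ofReal
  rw [gammaMeasure, gammaMeasure, ← withDensity_mul _ (hpdf a r) hmeas,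
    ← withDensity_smul _ (hpdf _ _)]
  refine withDensity_congr_ae ?_
  filter_upwards [Measure.ae_ne volume 0] with x hx
  rcases hx.lt_or_gt with hneg | hpos
  · simp [gammaPDF_of_neg hneg]
  · simp only [Pi.mul_apply, Pi.smul_apply, smul_eq_mul, gammaPDF]
    rw [← ENNReal.ofReal_mul (gammaPDFReal_nonneg ha hr x), gammaPDFReal_mul_exp ha has hrc hpos,
      ENNReal.ofReal_mul (gammaTiltConst_pos ha hr has hrc).le]

lemma integrable_exp_gammaMeasure (ha : 0 < a) (hr : 0 < r) (has : 0 < a + s) (hrc : 0 < r + c) :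
    Integrable (fun x => exp (s * log x - c * x)) (gammaMeasure a r) :=
  have := isProbabilityMeasure_gammaMeasure has hrc
  (integrable_exp_and_integral_exp_eq_of_withDensity_eq_smul (by fun_prop)
    (withDensity_exp_gammaMeasure ha hr has hrc) (gammaTiltConst_pos ha hr has hrc).le).1

lemma gammaMeasure_tilted (ha : 0 < a) (hr : 0 < r) (has : 0 < a + s) (hrc : 0 < r + c) :
    (gammaMeasure a r).tilted (fun x => s * log x - c * x) = gammaMeasure (a + s) (r + c) :=
  have := isProbabilityMeasure_gammaMeasure has hrc
  tilted_eq_of_withDensity_eq_smul (by fun_prop) (withDensity_exp_gammaMeasure ha hr has hrc)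
    (gammaTiltConst_pos ha hr has hrc)

lemma integrable_id_gammaMeasure (ha : 0 < a) (hr : 0 < r) :
    Integrable (fun x => x) (gammaMeasure a r) := by
  refine (integrable_exp_gammaMeasure (s := 1) (c := 0) ha hr (by linarith) (by linarith)).mono'
    (by fun_prop) (ae_of_all _ fun x => ?_)
  rcases eq_or_ne x 0 with rfl | hx
  · simp
  · rw [norm_eq_abs, one_mul, zero_mul, sub_zero, ← log_abs, exp_log (abs_pos.mpr hx)]

lemma integrable_log_gammaMeasure (ha : 0 < a) (hr : 0 < r) :
    Integrable log (gammaMeasure a r) := by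
  have hε : 0 < a / 2 := by positivity
  have hbound := (integrable_exp_gammaMeasure (s := 1) (c := 0) ha hr (by linarith)
    (by linarith)).add ((integrable_exp_gammaMeasure (s := -(a / 2)) (c := 0) ha hr (by linarith)
    (by linarith)).div_const (a / 2))
  refine hbound.mono' (by fun_prop) (ae_of_all _ fun x => ?_)
  simp only [Pi.add_apply, one_mul, zero_mul, sub_zero, norm_eq_abs, abs_le]
  have hpos : log x ≤ exp (log x) := by linarith [add_one_le_exp (log x)]
  have hneg : -log x ≤ exp (-(a / 2) * log x) / (a / 2) := by
    rw [le_div_iff₀ hε]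
    linarith [add_one_le_exp (-(a / 2) * log x)]
  constructor <;> linarith [exp_pos (log x), div_nonneg (exp_pos (-(a / 2) * log x)).le hε.le]

end Gamma

lemma negLogGauss_eq (y m l : ℝ) :
    negLogGauss y m l = 1 / 2 * log (2 * π) - (1 / 2 * log l - (y - m) ^ 2 / 2 * l) := by
  rw [negLogGauss]
  ring

lemma integrable_negLogGauss_iff {y m : ℝ} {q : Measure ℝ} [IsFiniteMeasure q] :
    Integrable (negLogGauss y m) q ↔
      Integrable (fun l => 1 / 2 * log l - (y - m) ^ 2 / 2 * l) q := by
  rw [show negLogGauss y m = _ from funext (negLogGauss_eq y m)]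
  refine ⟨fun h => ((integrable_const (1 / 2 * log (2 * π))).sub h).congr
    (ae_of_all _ fun l => ?_), (integrable_const _).sub⟩
  simp only [Pi.sub_apply, sub_sub_cancel]

lemma noiseObjective_eq {y m α₀ β₀ : ℝ} {q : Measure ℝ} [IsProbabilityMeasure q]
    (hint : Integrable (negLogGauss y m) q) :
    noiseObjective y m α₀ β₀ q = 1 / 2 * log (2 * π) + ((klDiv q (gammaMeasure α₀ β₀)).toReal
      - ∫ l, 1 / 2 * log l - (y - m) ^ 2 / 2 * l ∂q) := by
  rw [noiseObjective, integral_congr_ae (ae_of_all _ (negLogGauss_eq y m)),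
    integral_sub (integrable_const _) (integrable_negLogGauss_iff.mp hint)]
  simp only [integral_const, probReal_univ, smul_eq_mul, one_mul]
  ring

/-- Closed-form variational update for the pixelwise noise precision `λ` (Eq. 26 of the paper,
shape–rate parameterization): the functional
`Φ(q) = ∫ [½ log(2π) − ½ log λ + λ(y−m)²/2] dq(λ) + KL(q‖Gamma(α₀,β₀))`, over probability
measures `q ≪ Gamma(α₀,β₀)` with finite KL and integrable integrand, is uniquely minimized at
`q* = Gamma(α₀ + 1/2, β₀ + (y − m)²/2)`. -/
theorem gamma_update_noise (y m : ℝ) (α₀ β₀ : ℝ) (hα : 0 < α₀) (hβ : 0 < β₀)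
    (q : Measure ℝ) [IsProbabilityMeasure q] (hac : q ≪ gammaMeasure α₀ β₀)
    (hkl : klDiv q (gammaMeasure α₀ β₀) ≠ ⊤)
    (hint : Integrable (negLogGauss y m) q) :
    noiseObjective y m α₀ β₀ (gammaMeasure (α₀ + 1 / 2) (β₀ + (y - m) ^ 2 / 2)) ≤
      noiseObjective y m α₀ β₀ q ∧
    (noiseObjective y m α₀ β₀ q =
        noiseObjective y m α₀ β₀ (gammaMeasure (α₀ + 1 / 2) (β₀ + (y - m) ^ 2 / 2)) ↔
      q = gammaMeasure (α₀ + 1 / 2) (β₀ + (y - m) ^ 2 / 2)) := by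
  have hα' : 0 < α₀ + 1 / 2 := by positivity
  have hβ' : 0 < β₀ + (y - m) ^ 2 / 2 := by positivity
  have := isProbabilityMeasure_gammaMeasure hα hβ
  have := isProbabilityMeasure_gammaMeasure hα' hβ'
  have htilt := gammaMeasure_tilted (s := 1 / 2) (c := (y - m) ^ 2 / 2) hα hβ hα' hβ'
  have hgQ : Integrable (fun l => 1 / 2 * log l - (y - m) ^ 2 / 2 * l)
      (gammaMeasure (α₀ + 1 / 2) (β₀ + (y - m) ^ 2 / 2)) :=
    ((integrable_log_gammaMeasure hα' hβ').const_mul _).sub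
      ((integrable_id_gammaMeasure hα' hβ').const_mul _)
  have hgibbs := gibbs_variational_principle (integrable_exp_gammaMeasure hα hβ hα' hβ')
    (by fun_prop) (htilt ▸ hgQ) hac hkl (integrable_negLogGauss_iff.mp hint)
  rw [htilt] at hgibbs
  rw [noiseObjective_eq hint, noiseObjective_eq (integrable_negLogGauss_iff.mpr hgQ)]
  simpa only [add_le_add_iff_left, add_right_inj] using hgibbs
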